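/- arXiv:1304.5714 — 6 statements merged into one kernel-verified Lean document; each statement's English description precedes it below -/
import Mathlib

section
/- For every finite nonempty set C there exists a constant m (depending only on |C|) such that for any sequence f_1, ..., f_m of transformations of C, there exist indices 1 ≤ j ≤ k ≤ m such that the composite f_j ∘ f_{j+1} ∘ ... ∘ f_k (in the order of the sequence, acting on the right) is idempotent. -/
/- Colour each pair `a < b` of indices by the transformation `f_{a+1} ⋯ f_b`. By the
multicolour Ramsey theorem for triangles with `|C|^|C|` colours, a long enough sequence has indices
`a < b < c` with `f_{a+1} ⋯ f_b = f_{b+1} ⋯ f_c = f_{a+1} ⋯ f_c =: g`, and then `g g = g`. -/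

/-- The composite of the transformations `f j, f (j+1), …, f k`, applied in order
(acting on the right, i.e. `(fg)(q) = g(f(q))`). -/
def applySeq {C : Type*} (f : ℕ → C → C) (j k : ℕ) : C → C :=
  fun q => (List.Ico j (k + 1)).foldl (fun x i => f i x) q

open Finset

/-- An upper bound for the Ramsey number of triangles with `r` colours: besides the minimum `v`,
`r * ramseyTri (r - 1) + 1` further points force a colour class of edges from `v` of size
`> ramseyTri (r - 1)`. -/
def ramseyTri : ℕ → ℕ
  | 0 => 2
  | r + 1 => (r + 1) * ramseyTri r + 2

lemma two_le_ramseyTri (r : ℕ) : 2 ≤ ramseyTri r := by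
  cases r <;> simp [ramseyTri]

section Ramsey

variable {α G : Type*} [LinearOrder α] (col : α → α → G)

def HasMonochromaticTriangle (S : Finset α) : Prop :=
  ∃ a ∈ S, ∃ b ∈ S, ∃ c ∈ S, a < b ∧ b < c ∧ col a b = col b c ∧ col a b = col a c

variable {col}

theorem HasMonochromaticTriangle.mono {S T : Finset α} (h : HasMonochromaticTriangle col T)
    (hTS : T ⊆ S) : HasMonochromaticTriangle col S :=
  let ⟨a, ha, b, hb, c, hc, habc⟩ := h
  ⟨a, hTS ha, b, hTS hb, c, hTS hc, habc⟩

theorem hasMonochromaticTriangle_of_ramseyTri_le_card [DecidableEq G] (s : Finset G) (S : Finset α)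
    (hcol : ∀ a ∈ S, ∀ b ∈ S, a < b → col a b ∈ s) (hS : ramseyTri #s ≤ #S) :
    HasMonochromaticTriangle col S := by
  induction hr : #s generalizing s S with
  | zero =>
    rw [card_eq_zero] at hr
    subst hr
    obtain ⟨a, ha, b, hb, hab⟩ :=
      one_lt_card.mp (show 1 < #S by simp only [card_empty, ramseyTri] at hS; omega)
    rcases hab.lt_or_gt with h | h
    · exact absurd (hcol a ha b hb h) (notMem_empty _)
    · exact absurd (hcol b hb a ha h) (notMem_empty _)
  | succ r ih =>
    rw [hr] at hS
    have hSne : S.Nonempty := card_pos.mp (by simp only [ramseyTri] at hS; omega)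
    set v := S.min' hSne
    have hv : v ∈ S := S.min'_mem hSne
    have hv_lt : ∀ w ∈ S.erase v, v < w := fun w hw => S.min'_lt_of_mem_erase_min' hSne hw
    obtain ⟨c₀, hc₀, hT⟩ := exists_lt_card_fiber_of_mul_lt_card_of_maps_to (f := col v)
      (fun w hw => hcol v hv w (mem_of_mem_erase hw) (hv_lt w hw))
      (show #s * ramseyTri r < #(S.erase v) by
        rw [card_erase_of_mem hv, hr]; simp only [ramseyTri] at hS; omega)
    -- Either the class `T` of edges from `v` of colour `c₀` has an edge of colour `c₀` inside
    -- it, closing a triangle with `v`, or `T` is coloured with one colour fewer.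
    set T := {w ∈ S.erase v | col v w = c₀}
    have hTS : T ⊆ S := (filter_subset _ _).trans (erase_subset _ _)
    by_cases hedge : ∃ a ∈ T, ∃ b ∈ T, a < b ∧ col a b = c₀
    · obtain ⟨a, ha, b, hb, hab, habc⟩ := hedge
      simp only [T, mem_filter] at ha hb
      exact ⟨v, hv, a, mem_of_mem_erase ha.1, b, mem_of_mem_erase hb.1, hv_lt a ha.1, hab,
        by rw [ha.2, habc], by rw [ha.2, hb.2]⟩
    · push Not at hedge
      refine (ih (s.erase c₀) T (fun a ha b hb hab => mem_erase.mpr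
        ⟨hedge a ha b hb hab, hcol a (hTS ha) b (hTS hb) hab⟩) ?_ ?_).mono hTS
      all_goals rw [card_erase_of_mem hc₀, hr]
      exacts [hT.le, rfl]

end Ramsey

lemma applySeq_eq_comp {C : Type*} (f : ℕ → C → C) {j k l : ℕ} (hjk : j ≤ k + 1) (hkl : k ≤ l) :
    applySeq f j l = applySeq f (k + 1) l ∘ applySeq f j k := by
  funext q
  simp only [applySeq, Function.comp_apply]
  rw [← List.foldl_append, List.Ico.append_consecutive hjk (by omega)]

theorem exists_idempotent_factor_of_transformations_general
    (C : Type*) [Fintype C] :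
    ∃ m : ℕ, 0 < m ∧ ∀ f : ℕ → C → C, ∃ j k : ℕ, 1 ≤ j ∧ j ≤ k ∧ k ≤ m ∧
      applySeq f j k ∘ applySeq f j k = applySeq f j k := by
  classical
  set n := Fintype.card (C → C)
  refine ⟨ramseyTri n, by linarith [two_le_ramseyTri n], fun f => ?_⟩
  obtain ⟨a, ha, b, hb, c, hc, hab, hbc, hg, hg'⟩ :=
    hasMonochromaticTriangle_of_ramseyTri_le_card (col := fun a b => applySeq f (a + 1) b) univ
      (range (ramseyTri n + 1)) (fun _ _ _ _ _ => mem_univ _)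
      (by rw [card_univ, card_range]; exact Nat.le_succ _)
  simp only [mem_range] at ha hb hc
  beta_reduce at hg hg'
  refine ⟨a + 1, b, by omega, by omega, by omega, ?_⟩
  calc applySeq f (a + 1) b ∘ applySeq f (a + 1) b
      = applySeq f (b + 1) c ∘ applySeq f (a + 1) b := by rw [hg]
    _ = applySeq f (a + 1) b := by rw [← applySeq_eq_comp f (by omega) hbc.le, hg']

theorem exists_idempotent_factor_of_transformations
    (C : Type*) [Fintype C] [Nonempty C] :
    ∃ m : ℕ, 0 < m ∧ ∀ f : ℕ → C → C, ∃ j k : ℕ, 1 ≤ j ∧ j ≤ k ∧ k ≤ m ∧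
      applySeq f j k ∘ applySeq f j k = applySeq f j k :=
  exists_idempotent_factor_of_transformations_general C
end

section
/- Let Q be a finite set with n elements, p ∈ Q, and let T_p be a set of transformations of Q closed under composition such that every t ∈ T_p is non-permutational with unique fixed point p. Then |T_p| ≤ (n-1)!. -/
/-!
Write `a ≤ b` when `a = b`, `b = p`, or `t a = b` for some `t ∈ T`. Closure under composition
makes this transitive, and since `p` is the only fixed point of the members of `T` it is
antisymmetric, with top `p`. In a linear extension of this order every `t ∈ T` fixes `p` and moves
each `a ≠ p` strictly up, so `T` injects into `∏_{a ≠ p} {b | a < b}`, a set of size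
`(n - 1) (n - 2) ⋯ 1`.
-/

/-- A transformation `f : Q → Q` is non-permutational if there is no subset `D ⊆ Q`
with `|D| > 1` mapped into itself on which `f` restricts to a bijection of `D`. -/
def NonPermutational {Q : Type*} (f : Q → Q) : Prop :=
  ¬ ∃ D : Set Q, 1 < D.ncard ∧ Set.BijOn f D D

open Finset Nat

section Counting

variable {α : Type*} [Fintype α]

theorem prod_card_Ioi_erase_eq_factorial [LinearOrder α] {p : α} (hp : ∀ a, a ≤ p) :
    ∏ a ∈ univ.erase p, #{b | a < b} = (Fintype.card α - 1)! := by
  set g : α → ℕ := fun a => #{b | a < b}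
  have hg : StrictAnti g := fun a b hab => card_lt_card <|
    (ssubset_iff_of_subset fun c hc => by grind).2 ⟨b, by simpa using hab, by simp⟩
  have himage : (univ.erase p).image g = Ico 1 (Fintype.card α) := by
    refine eq_of_subset_of_card_le (fun k hk => ?_) ?_
    · obtain ⟨a, ha, rfl⟩ := mem_image.1 hk
      have hap : a < p := lt_of_le_of_ne (hp a) (ne_of_mem_erase ha)
      exact mem_Ico.2 ⟨card_pos.2 ⟨p, by simpa using hap⟩,
        card_lt_univ_of_notMem (x := a) (by simp)⟩
    · rw [card_image_of_injective _ hg.injective, card_erase_of_mem (mem_univ p), Nat.card_Ico,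
        Finset.card_univ]
  have hcard : Fintype.card α = Fintype.card α - 1 + 1 :=
    (Nat.sub_add_cancel (Fintype.card_pos_iff.2 ⟨p⟩)).symm
  calc ∏ a ∈ univ.erase p, g a = ∏ k ∈ (univ.erase p).image g, k :=
        (prod_image (f := id) hg.injective.injOn).symm
    _ = (Fintype.card α - 1)! := by
      rw [himage, hcard, prod_Ico_id_eq_factorial, Nat.add_sub_cancel]

theorem ncard_le_factorial_of_lt_apply_of_linearOrder [LinearOrder α] {p : α} (hp : ∀ a, a ≤ p)
    {T : Set (α → α)} (hfix : ∀ t ∈ T, t p = p) (hlt : ∀ t ∈ T, ∀ a ≠ p, a < t a) :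
    T.ncard ≤ (Fintype.card α - 1)! := by
  classical
  let S : α → Finset α := fun a => if a = p then {p} else ({b | a < b} : Finset α)
  have hsub : T ⊆ Fintype.piFinset S := by
    intro t ht
    rw [mem_coe, Fintype.mem_piFinset]
    intro a
    by_cases ha : a = p
    · simp [S, ha, hfix t ht]
    · simpa [S, ha] using hlt t ht a ha
  calc T.ncard ≤ #(Fintype.piFinset S) := Set.ncard_coe_finset _ ▸ Set.ncard_le_ncard hsub
    _ = ∏ a ∈ univ.erase p, #{b | a < b} := by
      rw [Fintype.card_piFinset, ← mul_prod_erase _ _ (mem_univ p)]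
      simp only [S, if_pos, card_singleton, one_mul]
      exact prod_congr rfl fun a ha => by rw [if_neg (ne_of_mem_erase ha)]
    _ = (Fintype.card α - 1)! := prod_card_Ioi_erase_eq_factorial hp

theorem ncard_le_factorial_of_lt_apply [PartialOrder α]
    {p : α} (hp : ∀ a, a ≤ p) {T : Set (α → α)} (hfix : ∀ t ∈ T, t p = p)
    (hlt : ∀ t ∈ T, ∀ a ≠ p, a < t a) :
    T.ncard ≤ (Fintype.card α - 1)! := by
  let e : α →o LinearExtension α := toLinearExtension
  have hp' : ∀ a, e a ≤ e p := fun a => e.monotone (hp a)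
  have hlt' : ∀ t ∈ T, ∀ a ≠ p, e a < e (t a) := fun t ht a ha =>
    (e.monotone (hlt t ht a ha).le).lt_of_ne (hlt t ht a ha).ne
  exact @ncard_le_factorial_of_lt_apply_of_linearOrder (LinearExtension α) ‹Fintype α› _ (e p) hp' T hfix hlt'

end Counting

abbrev reachOrder {Q : Type*} {T : Set (Q → Q)} {p : Q}
    (hcomp : ∀ s ∈ T, ∀ t ∈ T, (fun q => t (s q)) ∈ T)
    (hfix : ∀ t ∈ T, t p = p) (huniq : ∀ t ∈ T, ∀ q, t q = q → q = p) : PartialOrder Q where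
  le a b := a = b ∨ b = p ∨ ∃ t ∈ T, t a = b
  le_refl a := Or.inl rfl
  le_trans a b c hab hbc := by
    rcases hbc with rfl | rfl | ⟨s, hs, rfl⟩
    · exact hab
    · exact Or.inr (Or.inl rfl)
    · rcases hab with rfl | rfl | ⟨t, ht, rfl⟩
      · exact Or.inr (Or.inr ⟨s, hs, rfl⟩)
      · exact Or.inr (Or.inl (hfix s hs))
      · exact Or.inr (Or.inr ⟨_, hcomp t ht s hs, rfl⟩)
  le_antisymm a b hab hba := by
    rcases hab with rfl | rfl | ⟨t, ht, rfl⟩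
    · rfl
    · rcases hba with rfl | rfl | ⟨s, hs, rfl⟩
      exacts [rfl, rfl, hfix s hs]
    · have hap : a = p := by
        rcases hba with h | h | ⟨s, hs, h⟩
        exacts [huniq t ht a h, h, huniq _ (hcomp t ht s hs) a h]
      subst hap
      exact (hfix t ht).symm

theorem card_transformations_with_fixed_point_le_general {Q : Type*} [Fintype Q]
    (n : ℕ) (hn : Fintype.card Q = n) (p : Q) (T : Set (Q → Q))
    (hcomp : ∀ s ∈ T, ∀ t ∈ T, (fun q => t (s q)) ∈ T)
    (hfix : ∀ t ∈ T, t p = p ∧ ∀ q : Q, t q = q → q = p) :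
    T.ncard ≤ Nat.factorial (n - 1) := by
  let := reachOrder hcomp (fun t ht => (hfix t ht).1) (fun t ht => (hfix t ht).2)
  subst hn
  refine ncard_le_factorial_of_lt_apply (fun a => Or.inr (Or.inl rfl))
    (fun t ht => (hfix t ht).1) fun t ht a ha => lt_of_le_of_ne ?_ ?_
  · exact Or.inr (Or.inr ⟨t, ht, rfl⟩)
  · exact fun h => ha ((hfix t ht).2 a h.symm)

theorem card_transformations_with_fixed_point_le {Q : Type*} [Fintype Q]
    (n : ℕ) (hn : Fintype.card Q = n) (p : Q) (T : Set (Q → Q))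
    (hcomp : ∀ s ∈ T, ∀ t ∈ T, (fun q => t (s q)) ∈ T)
    (hnp : ∀ t ∈ T, NonPermutational t)
    (hfix : ∀ t ∈ T, t p = p ∧ ∀ q : Q, t q = q → q = p) :
    T.ncard ≤ Nat.factorial (n - 1) :=
  card_transformations_with_fixed_point_le_general n hn p T hcomp hfix
end

section
/- Let Q be a finite set with n elements and let T be a subsemigroup of the full transformation semigroup on Q all of whose elements are non-permutational. Then |T| ≤ n!. -/
open Function Set
open scoped Nat

theorem Function.periodicPts_nonempty {α : Type*} [Finite α] [Nonempty α] (f : α → α) :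
    (periodicPts f).Nonempty := by
  let x := Classical.arbitrary α
  obtain ⟨m, n, hmn, heq⟩ := Finite.exists_ne_map_eq_of_infinite (fun k : ℕ => f^[k] x)
  wlog hlt : m < n generalizing m n
  · exact this n m hmn.symm heq.symm (by omega)
  refine ⟨f^[m] x, mk_mem_periodicPts (Nat.sub_pos_of_lt hlt) ?_⟩
  rw [IsPeriodicPt, IsFixedPt, ← iterate_add_apply, Nat.sub_add_cancel hlt.le]
  exact heq.symm

namespace NonPermutational

variable {Q : Type*} {f : Q → Q}

theorem eq_of_isFixedPt (hf : NonPermutational f) {a b : Q} (ha : IsFixedPt f a)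
    (hb : IsFixedPt f b) : a = b := by
  by_contra hab
  refine hf ⟨{a, b}, by rw [ncard_pair hab]; norm_num, (bijOn_id _).congr ?_⟩
  rintro x (rfl | rfl)
  exacts [ha.symm, hb.symm]

theorem exists_isFixedPt [Finite Q] [Nonempty Q] (hf : NonPermutational f) :
    ∃ p, IsFixedPt f p := by
  obtain ⟨p, hp⟩ := periodicPts_nonempty f
  have hsub : (periodicPts f).Subsingleton := by
    rw [← ncard_le_one_iff_subsingleton]
    exact not_lt.mp fun h => hf ⟨_, h, bijOn_periodicPts f⟩
  exact ⟨p, hsub ((bijOn_periodicPts f).mapsTo hp) hp⟩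

end NonPermutational

theorem ncard_setOf_rank_lt_le {α : Type*} {n : ℕ} (e : α ≃ Fin n) (q : α) :
    {f : α → α | f q = q ∧ ∀ x ≠ q, e (f x) < e x}.ncard ≤ (n - 1)! := by
  classical
  have : Fintype α := .ofEquiv _ e.symm
  let B : α → Finset (Fin n) := fun x => if x = q then {e q} else Finset.Iio (e x)
  have hmaps : MapsTo (fun f => e ∘ f) {f : α → α | f q = q ∧ ∀ x ≠ q, e (f x) < e x}
      (Fintype.piFinset B) := by
    rintro f ⟨hq, hlt⟩
    rw [Fintype.coe_piFinset]
    intro x _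
    by_cases hx : x = q
    · simp [B, hx, hq]
    · simpa [B, hx] using hlt x hx
  calc _ ≤ (Fintype.piFinset B : Set (α → Fin n)).ncard :=
        ncard_le_ncard_of_injOn _ hmaps (e.injective.comp_left.injOn) (Finset.finite_toSet _)
    _ = ∏ x, (B x).card := by rw [ncard_coe_finset, Fintype.card_piFinset]
    _ ≤ ∏ x, max (e x : ℕ) 1 := by
        gcongr with x
        by_cases hx : x = q <;> simp [B, hx]
    _ = ∏ i ∈ Finset.range n, max i 1 := by
        rw [e.prod_comp (fun i => max (i : ℕ) 1), Fin.prod_univ_eq_prod_range (fun i => max i 1)]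
    _ = (n - 1)! := by
        cases n with
        | zero => rfl
        | succ n => simp [Finset.prod_range_succ', Finset.prod_range_add_one_eq_factorial]

theorem exists_equivFin_rank_apply_lt {Q : Type*} [Fintype Q] (S : Set (Q → Q)) (q : Q)
    (hcomp : ∀ s ∈ S, ∀ t ∈ S, (fun x => t (s x)) ∈ S)
    (hfix : ∀ t ∈ S, ∀ x, IsFixedPt t x → x = q) :
    ∃ e : Q ≃ Fin (Fintype.card Q), ∀ t ∈ S, ∀ x ≠ q, e (t x) < e x := by
  -- Antisymmetry: if `s b = a` and `t a = b`, the two compositions fix `b` and `a`, so both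
  -- equal `q`.
  let : PartialOrder Q :=
    { le := fun a b => a = b ∨ ∃ t ∈ S, t b = a
      le_refl := fun a => Or.inl rfl
      le_trans := by
        rintro a b c (rfl | ⟨s, hs, rfl⟩) (rfl | ⟨t, ht, rfl⟩)
        exacts [Or.inl rfl, Or.inr ⟨t, ht, rfl⟩, Or.inr ⟨s, hs, rfl⟩,
          Or.inr ⟨_, hcomp t ht s hs, rfl⟩]
      le_antisymm := by
        rintro a b (rfl | ⟨s, hs, rfl⟩) (hba | ⟨t, ht, hba⟩)
        · rfl
        · rfl
        · exact hba.symm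
        · have hb : b = q := hfix _ (hcomp s hs t ht) b (by simp [IsFixedPt, hba])
          have ha : s b = q := hfix _ (hcomp t ht s hs) (s b) (by simp [IsFixedPt, hba])
          rw [ha, hb] }
  let : Fintype (LinearExtension Q) := ‹Fintype Q›
  let e := (Fintype.orderIsoFinOfCardEq (LinearExtension Q) rfl).symm
  refine ⟨e.toEquiv, fun t ht x hx => ?_⟩
  have hle : toLinearExtension (t x) ≤ toLinearExtension x :=
    toLinearExtension.monotone (Or.inr ⟨t, ht, rfl⟩)
  exact e.lt_iff_lt.mpr (hle.lt_of_ne fun h => hx (hfix t ht x h))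

theorem ncard_setOf_mem_apply_eq_le {Q : Type*} [Fintype Q] {T : Set (Q → Q)}
    (hcomp : ∀ s ∈ T, ∀ t ∈ T, (fun x => t (s x)) ∈ T) (hnp : ∀ t ∈ T, NonPermutational t)
    (q : Q) : {t ∈ T | t q = q}.ncard ≤ (Fintype.card Q - 1)! := by
  obtain ⟨e, he⟩ := exists_equivFin_rank_apply_lt {t ∈ T | t q = q} q
    (fun s hs t ht => ⟨hcomp s hs.1 t ht.1, by simp only [hs.2, ht.2]⟩)
    (fun t ht x hx => (hnp t ht.1).eq_of_isFixedPt hx ht.2)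
  exact (ncard_le_ncard fun t ht => show _ ∧ _ from ⟨ht.2, he t ht⟩).trans
    (ncard_setOf_rank_lt_le e q)

theorem card_nonPermutational_semigroup_le {Q : Type*} [Fintype Q]
    (n : ℕ) (hn : Fintype.card Q = n) (T : Set (Q → Q))
    (hcomp : ∀ s ∈ T, ∀ t ∈ T, (fun q => t (s q)) ∈ T)
    (hnp : ∀ t ∈ T, NonPermutational t) :
    T.ncard ≤ Nat.factorial n := by
  subst hn
  rcases isEmpty_or_nonempty Q with hQ | hQ
  · calc T.ncard ≤ Nat.card (Q → Q) := ncard_le_card T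
      _ = (Fintype.card Q)! := by simp
  have hcover : T ⊆ ⋃ q ∈ Finset.univ, {t ∈ T | t q = q} := fun t ht => by
    obtain ⟨p, hp⟩ := (hnp t ht).exists_isFixedPt
    exact mem_biUnion (Finset.mem_univ p) ⟨ht, hp⟩
  calc T.ncard ≤ ∑ q : Q, {t ∈ T | t q = q}.ncard :=
        (ncard_le_ncard hcover).trans (Finset.set_ncard_biUnion_le _ _)
    _ ≤ ∑ _q : Q, (Fintype.card Q - 1)! :=
        Finset.sum_le_sum fun q _ => ncard_setOf_mem_apply_eq_le hcomp hnp q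
    _ = (Fintype.card Q)! := by
        rw [Finset.sum_const, Finset.card_univ, smul_eq_mul,
          Nat.mul_factorial_pred Fintype.card_ne_zero]
end

section
/- Let A be a reduced (minimal, connected) deterministic finite automaton recognizing a k-definite language L. Then A avoids pattern P_d: there are no two distinct states p, q and a nonempty word x with p·x = p and q·x = q. -/
/-- State `q` is reachable from `p` in the DFA `M`. -/
def Reach {α σ : Type*} (M : DFA α σ) (p q : σ) : Prop :=
  ∃ x : List α, M.evalFrom p x = q

/-- A DFA is reduced if it is connected and all pairs of distinct states are
distinguishable by some word. -/
def Reduced {α σ : Type*} (M : DFA α σ) : Prop :=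
  (∀ q : σ, ∃ x : List α, M.evalFrom M.start x = q) ∧
  (∀ p q : σ, p ≠ q → ∃ w : List α,
    ¬ (M.evalFrom p w ∈ M.accept ↔ M.evalFrom q w ∈ M.accept))

/-- `C` is a strongly connected component (class of mutual reachability) of `M`. -/
def IsComponent {α σ : Type*} (M : DFA α σ) (C : Set σ) : Prop :=
  ∃ p : σ, C = {q | Reach M p q ∧ Reach M q p}

/-- A component is a sink if it is closed under all letters. -/
def IsSink {α σ : Type*} (M : DFA α σ) (C : Set σ) : Prop :=
  IsComponent M C ∧ ∀ q ∈ C, ∀ a : α, M.step q a ∈ C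

/-- A component is trivial if it is a singleton `{p}` with `p·a ≠ p` for every letter `a`. -/
def IsTrivialComponent {α σ : Type*} (M : DFA α σ) (C : Set σ) : Prop :=
  IsComponent M C ∧ ∃ p : σ, C = {p} ∧ ∀ a : α, M.step p a ≠ p

/-- `f` is non-permutational on `C`: no subset `D ⊆ C` with `|D| > 1` is mapped
bijectively onto itself by `f`. -/
def NonPermutationalOn {σ : Type*} (f : σ → σ) (C : Set σ) : Prop :=
  ¬ ∃ D : Set σ, D ⊆ C ∧ 1 < D.ncard ∧ Set.BijOn f D D

/-- The automaton avoids pattern `P_d`. -/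
def AvoidsPd {α σ : Type*} (M : DFA α σ) : Prop :=
  ¬ ∃ (p q : σ) (x : List α), p ≠ q ∧ x ≠ [] ∧
    M.evalFrom p x = p ∧ M.evalFrom q x = q

/-- The automaton avoids pattern `P_g`. -/
def AvoidsPg {α σ : Type*} (M : DFA α σ) : Prop :=
  ¬ ∃ (p q : σ) (x y : List α), p ≠ q ∧ x ≠ [] ∧ y ≠ [] ∧
    M.evalFrom p x = p ∧ M.evalFrom q x = q ∧ M.evalFrom p y = q

/-- A language is k-definite if membership only depends on the suffix of length k. -/
def IsKDefinite {α : Type*} (k : ℕ) (L : Language α) : Prop :=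
  ∀ x y : List α, y.length = k → (x ++ y ∈ L ↔ y ∈ L)

/-! If a nonempty word `x` fixes distinct states `p = start·u` and `q = start·v`, and `w`
separates them, then `u xᵏ w` and `v xᵏ w` share their suffix of length `k`, so k-definiteness
puts both or neither in the language; yet they lead to `p·w` and `q·w`, exactly one of which
is accepting. -/

lemma IsKDefinite.append_mem_iff_append_mem {α : Type*} {k : ℕ} {L : Language α}
    (hL : IsKDefinite k L) (u v : List α) {z : List α} (hz : k ≤ z.length) :
    u ++ z ∈ L ↔ v ++ z ∈ L := by
  have hsuffix : (z.drop (z.length - k)).length = k := by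
    rw [List.length_drop]
    omega
  rw [← z.take_append_drop (z.length - k), ← List.append_assoc, ← List.append_assoc,
    hL _ _ hsuffix, hL _ _ hsuffix]

lemma DFA.evalFrom_flatten_replicate {α σ : Type*} (M : DFA α σ) {s : σ} {x : List α}
    (hx : M.evalFrom s x = s) (n : ℕ) : M.evalFrom s (List.replicate n x).flatten = s :=
  M.evalFrom_of_pow hx
    (Language.mem_kstar.2 ⟨_, rfl, fun _ hz => (List.eq_of_mem_replicate hz).symm ▸ rfl⟩)

lemma List.le_length_flatten_replicate {α : Type*} {x : List α} (hx : x ≠ []) (n : ℕ) :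
    n ≤ (List.replicate n x).flatten.length := by
  simpa [List.length_flatten, List.map_replicate, List.sum_replicate] using
    Nat.le_mul_of_pos_right n (List.length_pos_iff.2 hx)

theorem definite_avoids_Pd {α σ : Type*} (M : DFA α σ) (k : ℕ)
    (hred : Reduced M) (hdef : IsKDefinite k M.accepts) :
    AvoidsPd M := by
  rintro ⟨p, q, x, hpq, hx, hpx, hqx⟩
  obtain ⟨u, rfl⟩ := hred.1 p
  obtain ⟨v, rfl⟩ := hred.1 q
  obtain ⟨w, hw⟩ := hred.2 _ _ hpq
  have hlong : k ≤ ((List.replicate k x).flatten ++ w).length :=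
    (List.le_length_flatten_replicate hx k).trans (by simp)
  have hsame := hdef.append_mem_iff_append_mem u v hlong
  simp only [DFA.mem_accepts, DFA.eval, DFA.evalFrom_of_append,
    M.evalFrom_flatten_replicate hpx, M.evalFrom_flatten_replicate hqx] at hsame
  exact hw hsame
end

section
/- Let A be a reduced DFA such that every nonempty word induces a non-permutational transformation of the state set. Then A has a unique sink component, and every other strongly connected component of A is trivial. -/
/-!
A non-permutational transformation of a finite set has at most one periodic point, since its
periodic points form a subset that it permutes. Hence if a nonempty word `x` fixes a state `p`,
iterating `x` from any state eventually lands on `p`: a state with a nonempty loop is reachable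
from everywhere. Such states exist (a fixed point of any single letter), all of them lie in one
component, and that component is a sink. Conversely every nontrivial component carries a
nonempty loop, and so does every sink component as soon as there is a letter (with no letters,
reducedness leaves a single state).
-/

open Function Set

theorem Function.exists_iterate_mem_periodicPts {α : Type*} [Finite α] (f : α → α) (x : α) :
    ∃ m, f^[m] x ∈ periodicPts f := by
  obtain ⟨m, n, hmn, h⟩ :=
    Set.finite_univ.exists_lt_map_eq_of_forall_mem (f := fun n => f^[n] x) fun _ => mem_univ _
  refine ⟨m, mk_mem_periodicPts (Nat.sub_pos_of_lt hmn) ?_⟩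
  change f^[n - m] (f^[m] x) = f^[m] x
  rw [← iterate_add_apply, Nat.sub_add_cancel hmn.le]
  exact h.symm

namespace NonPermutationalOn

variable {σ : Type*} [Finite σ] {f : σ → σ}

theorem periodicPts_subsingleton (h : NonPermutationalOn f univ) :
    (periodicPts f).Subsingleton := by
  intro a ha b hb
  by_contra hne
  exact h ⟨periodicPts f, subset_univ _,
    (one_lt_ncard_iff (toFinite _)).2 ⟨a, b, ha, hb, hne⟩, bijOn_periodicPts f⟩

theorem exists_iterate_eq (h : NonPermutationalOn f univ) {p : σ} (hp : IsFixedPt f p)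
    (s : σ) : ∃ n, f^[n] s = p := by
  obtain ⟨m, hm⟩ := exists_iterate_mem_periodicPts f s
  exact ⟨m, h.periodicPts_subsingleton hm (mk_mem_periodicPts one_pos hp)⟩

theorem exists_isFixedPt [Nonempty σ] (h : NonPermutationalOn f univ) : ∃ p, IsFixedPt f p := by
  obtain ⟨m, hm⟩ := exists_iterate_mem_periodicPts f (Classical.arbitrary σ)
  exact ⟨_, h.periodicPts_subsingleton ((bijOn_periodicPts f).mapsTo hm) hm⟩

end NonPermutationalOn

section Automaton

variable {α σ : Type*} {M : DFA α σ}

namespace Reach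

theorem refl (p : σ) : Reach M p p := ⟨[], rfl⟩

theorem trans {p q r : σ} (hpq : Reach M p q) (hqr : Reach M q r) : Reach M p r := by
  obtain ⟨u, rfl⟩ := hpq
  obtain ⟨v, rfl⟩ := hqr
  exact ⟨u ++ v, DFA.evalFrom_of_append _ _ _ _⟩

theorem iterate_evalFrom (x : List α) (s : σ) (n : ℕ) :
    Reach M s ((fun q => M.evalFrom q x)^[n] s) := by
  induction n with
  | zero => exact refl s
  | succ n ih =>
    rw [iterate_succ_apply']
    exact ih.trans ⟨x, rfl⟩

end Reach

theorem eq_start_of_isEmpty [IsEmpty α] (hreach : ∀ q, Reach M M.start q) (q : σ) :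
    q = M.start := by
  obtain ⟨x, rfl⟩ := hreach q
  cases x with
  | nil => rfl
  | cons a _ => exact isEmptyElim a

def component (M : DFA α σ) (p : σ) : Set σ := {q | Reach M p q ∧ Reach M q p}

theorem mem_component_self (p : σ) : p ∈ component M p := ⟨Reach.refl p, Reach.refl p⟩

theorem component_eq_of_reach {p q : σ} (hpq : Reach M p q) (hqp : Reach M q p) :
    component M p = component M q := by
  ext r
  exact ⟨fun h => ⟨hqp.trans h.1, h.2.trans hpq⟩, fun h => ⟨hpq.trans h.1, h.2.trans hqp⟩⟩

theorem isSink_component_of_forall_reach {p : σ} (hp : ∀ s, Reach M s p) :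
    IsSink M (component M p) :=
  ⟨⟨p, rfl⟩, fun _ hq a => ⟨hq.1.trans ⟨[a], rfl⟩, hp _⟩⟩

theorem exists_loop_of_isSink_component {p : σ} (hp : IsSink M (component M p)) (a : α) :
    ∃ x ≠ [], M.evalFrom p x = p := by
  obtain ⟨v, hv⟩ := (hp.2 p (mem_component_self p) a).2
  exact ⟨a :: v, List.cons_ne_nil a v, hv⟩

theorem exists_loop_of_not_isTrivialComponent {p : σ}
    (hp : ¬ IsTrivialComponent M (component M p)) : ∃ x ≠ [], M.evalFrom p x = p := by
  by_contra! hno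
  refine hp ⟨⟨p, rfl⟩, p, ?_, fun a => hno [a] (List.cons_ne_nil a [])⟩
  refine Subset.antisymm (fun q ⟨⟨u, hu⟩, ⟨v, hv⟩⟩ => ?_)
    (singleton_subset_iff.2 (mem_component_self p))
  obtain rfl | hu_ne := eq_or_ne u []
  · exact hu.symm
  · refine absurd ?_ (hno (u ++ v) (List.append_ne_nil_of_left_ne_nil hu_ne v))
    rw [DFA.evalFrom_of_append, hu, hv]

section NonPermutational

variable [Finite σ]
  (hnp : ∀ x : List α, x ≠ [] → NonPermutationalOn (fun q => M.evalFrom q x) univ)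
include hnp

theorem forall_reach_of_evalFrom_eq {p : σ} {x : List α} (hx : x ≠ [])
    (hp : M.evalFrom p x = p) (s : σ) : Reach M s p := by
  obtain ⟨n, hn⟩ := (hnp x hx).exists_iterate_eq hp s
  exact hn ▸ Reach.iterate_evalFrom x s n

theorem exists_forall_reach (hreach : ∀ q, Reach M M.start q) : ∃ r, ∀ s, Reach M s r := by
  cases isEmpty_or_nonempty α with
  | inl _ => exact ⟨M.start, fun s => eq_start_of_isEmpty hreach s ▸ Reach.refl s⟩
  | inr hα =>
    obtain ⟨a⟩ := hα
    have : Nonempty σ := ⟨M.start⟩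
    obtain ⟨r, hr⟩ := (hnp [a] (List.cons_ne_nil a [])).exists_isFixedPt
    exact ⟨r, forall_reach_of_evalFrom_eq hnp (List.cons_ne_nil a []) hr⟩

theorem forall_reach_of_isSink_component (hreach : ∀ q, Reach M M.start q) {p : σ}
    (hp : IsSink M (component M p)) (s : σ) : Reach M s p := by
  cases isEmpty_or_nonempty α with
  | inl _ => rw [eq_start_of_isEmpty hreach s, eq_start_of_isEmpty hreach p]; exact Reach.refl _
  | inr _ =>
    obtain ⟨x, hx, hpx⟩ := exists_loop_of_isSink_component hp (Classical.arbitrary α)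
    exact forall_reach_of_evalFrom_eq hnp hx hpx s

end NonPermutational

end Automaton

theorem unique_sink_of_nonPermutational {α σ : Type*} [Fintype σ] (M : DFA α σ)
    (hred : Reduced M)
    (hnp : ∀ x : List α, x ≠ [] → NonPermutationalOn (fun q => M.evalFrom q x) Set.univ) :
    (∃! C : Set σ, IsComponent M C ∧ IsSink M C) ∧
    (∀ C : Set σ, IsComponent M C → ¬ IsSink M C → IsTrivialComponent M C) := by
  obtain ⟨r, hr⟩ := exists_forall_reach hnp hred.1
  refine ⟨⟨component M r, ⟨⟨r, rfl⟩, isSink_component_of_forall_reach hr⟩, ?_⟩, ?_⟩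
  · rintro C ⟨⟨p, rfl⟩, hp⟩
    exact component_eq_of_reach (hr p) (forall_reach_of_isSink_component hnp hred.1 hp r)
  · rintro C ⟨p, rfl⟩ hp
    by_contra htriv
    obtain ⟨x, hx, hpx⟩ := exists_loop_of_not_isTrivialComponent htriv
    exact hp (isSink_component_of_forall_reach (forall_reach_of_evalFrom_eq hnp hx hpx))
end

section
/- Let A be a DFA with a unique sink component C such that all other components are trivial, and suppose for each nonempty word u the restriction of u's action to C is non-permutational. Then the language L(A) is definite: there exists k such that for all x ∈ Σ* and y ∈ Σ^k, xy ∈ L(A) ⟺ y ∈ L(A). -/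
namespace DFA

variable {α σ : Type*} (M : DFA α σ)

theorem evalFrom_mem_of_step_mem {S : Set σ} (hS : ∀ q ∈ S, ∀ a, M.step q a ∈ S) :
    ∀ (w : List α) {q : σ}, q ∈ S → M.evalFrom q w ∈ S
  | [], _, hq => hq
  | a :: w, q, hq => evalFrom_mem_of_step_mem hS w (hS q hq a)

theorem toNFA_toDFA_evalFrom (S : Set σ) (x : List α) :
    M.toNFA.toDFA.evalFrom S x = (M.evalFrom · x) '' S := by
  change M.toNFA.evalFrom S x = _
  rw [NFA.evalFrom_eq_biUnion_singleton]
  simp [Set.image_eq_iUnion]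

end DFA

theorem NonPermutationalOn.subsingleton_of_image_eq {σ : Type*} {f : σ → σ} {C D : Set σ}
    (hf : NonPermutationalOn f C) (hDC : D ⊆ C) (hD : D.Finite) (himage : f '' D = D) :
    D.Subsingleton := by
  have hmaps : Set.MapsTo f D D := fun x hx => himage ▸ Set.mem_image_of_mem f hx
  have hsurj : Set.SurjOn f D D := by
    conv_rhs => rw [← himage]
    exact Set.surjOn_image f D
  have hbij : Set.BijOn f D D := (hD.surjOn_iff_bijOn_of_mapsTo hmaps).mp hsurj
  rw [← Set.not_nontrivial_iff]
  intro hnt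
  have : Finite D := hD
  exact hf ⟨D, hDC, Set.one_lt_ncard_iff_nontrivial.mpr hnt, hbij⟩

section TrivialOutsideSink

variable {α σ : Type*} {M : DFA α σ} {C : Set σ}

theorem mem_of_evalFrom_eq_self
    (htriv : ∀ D : Set σ, IsComponent M D → D ≠ C → IsTrivialComponent M D)
    {p : σ} {w : List α} (hw : w ≠ []) (hloop : M.evalFrom p w = p) : p ∈ C := by
  by_contra hpC
  set D : Set σ := {q | Reach M p q ∧ Reach M q p}
  have hpD : p ∈ D := ⟨⟨[], rfl⟩, ⟨[], rfl⟩⟩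
  obtain ⟨-, r, hDr, hstep⟩ := htriv D ⟨p, rfl⟩ fun h => hpC (h ▸ hpD)
  obtain rfl : p = r := by simpa [hDr] using hpD
  obtain ⟨a, w, rfl⟩ := List.exists_cons_of_ne_nil hw
  have hsucc : M.step p a ∈ D := ⟨⟨[a], rfl⟩, ⟨w, hloop⟩⟩
  exact hstep a (by simpa [hDr] using hsucc)

theorem evalFrom_mem_of_card_le_length [Fintype σ] (hC : ∀ q ∈ C, ∀ a, M.step q a ∈ C)
    (htriv : ∀ D : Set σ, IsComponent M D → D ≠ C → IsTrivialComponent M D)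
    (p : σ) {w : List α} (hw : Fintype.card σ ≤ w.length) : M.evalFrom p w ∈ C := by
  obtain ⟨q, x, u, z, rfl, -, hu, -, hloop, hz⟩ := M.evalFrom_split hw rfl
  rw [← hz]
  exact M.evalFrom_mem_of_step_mem hC z (mem_of_evalFrom_eq_self htriv hu hloop)

theorem subsingleton_image_evalFrom_of_card_le_length [Fintype σ]
    (hC : ∀ q ∈ C, ∀ a, M.step q a ∈ C)
    (hnp : ∀ u : List α, u ≠ [] → NonPermutationalOn (fun q => M.evalFrom q u) C)
    {w : List α} (hw : Fintype.card (Set σ) ≤ w.length) :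
    ((M.evalFrom · w) '' C).Subsingleton := by
  obtain ⟨D, x, u, z, rfl, -, hu, hx, hloop, hz⟩ := M.toNFA.toDFA.evalFrom_split hw rfl
  simp only [DFA.toNFA_toDFA_evalFrom] at hx hloop hz
  have hDC : D ⊆ C := by
    rw [← hx]
    rintro _ ⟨q, hq, rfl⟩
    exact M.evalFrom_mem_of_step_mem hC x hq
  rw [← hz]
  exact ((hnp u hu).subsingleton_of_image_eq hDC (Set.toFinite D) hloop).image _

end TrivialOutsideSink

theorem definite_of_unique_sink_general {α σ : Type*} [Fintype σ] (M : DFA α σ) (C : Set σ)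
    (hC : IsSink M C)
    (htriv : ∀ D : Set σ, IsComponent M D → D ≠ C → IsTrivialComponent M D)
    (hnp : ∀ u : List α, u ≠ [] → NonPermutationalOn (fun q => M.evalFrom q u) C) :
    ∃ k : ℕ, ∀ x y : List α, y.length = k → (x ++ y ∈ M.accepts ↔ y ∈ M.accepts) := by
  refine ⟨Fintype.card σ + Fintype.card (Set σ), fun x y hy => ?_⟩
  have hsync : ∀ p q : σ, M.evalFrom p y = M.evalFrom q y := by
    have hlen₁ : Fintype.card σ ≤ (y.take (Fintype.card σ)).length := by
      rw [List.length_take, hy]; omega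
    have hlen₂ : Fintype.card (Set σ) ≤ (y.drop (Fintype.card σ)).length := by
      rw [List.length_drop, hy]; omega
    have hsub := subsingleton_image_evalFrom_of_card_le_length hC.2 hnp hlen₂
    intro p q
    rw [← List.take_append_drop (Fintype.card σ) y, M.evalFrom_of_append, M.evalFrom_of_append]
    exact hsub (Set.mem_image_of_mem _ (evalFrom_mem_of_card_le_length hC.2 htriv p hlen₁))
      (Set.mem_image_of_mem _ (evalFrom_mem_of_card_le_length hC.2 htriv q hlen₁))
  rw [DFA.mem_accepts, DFA.mem_accepts, DFA.eval, M.evalFrom_of_append, hsync]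

theorem definite_of_unique_sink {α σ : Type*} [Fintype σ] (M : DFA α σ) (C : Set σ)
    (hC : IsSink M C)
    (huniq : ∀ D : Set σ, IsComponent M D → IsSink M D → D = C)
    (htriv : ∀ D : Set σ, IsComponent M D → D ≠ C → IsTrivialComponent M D)
    (hnp : ∀ u : List α, u ≠ [] → NonPermutationalOn (fun q => M.evalFrom q u) C) :
    ∃ k : ℕ, ∀ x y : List α, y.length = k → (x ++ y ∈ M.accepts ↔ y ∈ M.accepts) :=
  definite_of_unique_sink_general M C hC htriv hnp
end
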